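/- Let τ = (τ_n : V_{n+1}* → V_n*)_{n≥0} be a directive sequence of morphisms satisfying Property (P_∞) with V_n = {v_{1,n},…,v_{m_n,n}}. Let x, y ∈ X_τ satisfy x_i = y_i for all i < 0 and x_0 ≠ y_0, and for each n ≥ 1 let x^{(n)}, y^{(n)} ∈ X_τ^{(n)} be the τ_{[0,n)}-factorizations of x and y (i.e. x = S^{r_n}(τ_{[0,n)}(x^{(n)})) with 0 ≤ r_n < |τ_{[0,n)}(x^{(n)}_0)|, and similarly for y). Then there exist N ≥ 1 and 1 ≤ i ≤ N such that J(x^{(n)}, y^{(n)}) = (v_{i,n}, 0) for all n ≥ N. -/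

import Mathlib

/-!
Both factorizations of `x` and of `y` are recognizable. At level `0` this comes from the hat
morphism `τ₀` (every position where two consecutive letters cannot come from the same
`τ₀(a)` is a cut of every `τ₀`-factorization, and primitivity of `τ₁` puts such positions
arbitrarily far to the left); at level `n ≥ 1` from the markers `v_{m_n} v_1`, which occur
exactly at the cuts of a `τ_n`-factorization. Recognizability gives
`x⁽ⁿ⁾ = Sˢ τ_n(x⁽ⁿ⁺¹⁾)`, and since the images `τ_n(a)` form a prefix code, two such
factorizations of sequences that agree on the negative half-line are synchronized there.
So `x⁽ⁿ⁾` and `y⁽ⁿ⁾` again agree on negative coordinates and differ at `0`, and the block of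
`τ_n(x⁽ⁿ⁺¹⁾₀)` and `τ_n(y⁽ⁿ⁺¹⁾₀)` read across position `0` starts at the same place. The
prescribed prefixes of `τ_n` then show that `x⁽ⁿ⁾_{-1}` and `min(x⁽ⁿ⁾₀, y⁽ⁿ⁾₀)` both equal
`min(x⁽ⁿ⁺¹⁾₀, y⁽ⁿ⁺¹⁾₀)` when both letters are `≤ n` (`0`-based), and `0` otherwise. Hence
`dₙ = min(x⁽ⁿ⁾₀, y⁽ⁿ⁾₀)` satisfies `dₙ > 0 → dₙ₊₁ = dₙ`, so it is eventually constant, and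
`x⁽ⁿ⁾_{-1} = y⁽ⁿ⁾_{-1} = dₙ`.
-/

open Filter Topology MeasureTheory

namespace AsympSOE

/-! ### Subshift basics -/

/-- Shift of a bi-infinite sequence by `n` (the `n`-th power of the left shift `S`). -/
def SShift {A : Type*} (n : ℤ) (x : ℤ → A) : ℤ → A := fun i => x (i + n)

/-- Two bi-infinite sequences are (left) asymptotic: they agree on a left half-line. -/
def SAsymp {A : Type*} (x y : ℤ → A) : Prop := ∃ ℓ : ℤ, ∀ i < ℓ, x i = y i

/-- `y` belongs to the shift-orbit of `x`. -/
def SSameOrbit {A : Type*} (x y : ℤ → A) : Prop := ∃ n : ℤ, SShift n x = y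

/-- The shift-orbits of `x` and `y` are asymptotic. -/
def SOrbAsymp {A : Type*} (x y : ℤ → A) : Prop :=
  ∃ n n' : ℤ, SAsymp (SShift n x) (SShift n' y)

/-- `C` is an asymptotic component of the subshift `X`: it is the `SOrbAsymp`-class of
some `x ∈ X` and contains at least two distinct orbits. -/
def SIsAsymComponent {A : Type*} (X : Set (ℤ → A)) (C : Set (ℤ → A)) : Prop :=
  ∃ x ∈ X, C = {y ∈ X | SOrbAsymp x y} ∧ ∃ y ∈ X, SOrbAsymp x y ∧ ¬ SSameOrbit x y

/-- A subshift: a nonempty closed shift-invariant set of bi-infinite sequences. -/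
def IsSubshift {A : Type*} [TopologicalSpace A] (X : Set (ℤ → A)) : Prop :=
  X.Nonempty ∧ IsClosed X ∧ (∀ x ∈ X, SShift 1 x ∈ X) ∧ (∀ x ∈ X, SShift (-1) x ∈ X)

/-- A minimal subshift: every orbit is dense. -/
def IsMinimalSubshift {A : Type*} [TopologicalSpace A] (X : Set (ℤ → A)) : Prop :=
  IsSubshift X ∧ ∀ x ∈ X, ∀ y ∈ X, y ∈ closure {z | SSameOrbit x z}

/-- The words of length `n` appearing in points of `X`. -/
def langOf {A : Type*} (X : Set (ℤ → A)) (n : ℕ) : Set (List A) :=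
  {w | ∃ x ∈ X, ∃ a : ℤ, (List.range n).map (fun t => x (a + t)) = w}

/-- The complexity function of a subshift. -/
noncomputable def complexityOf {A : Type*} (X : Set (ℤ → A)) (n : ℕ) : ℕ :=
  (langOf X n).ncard

/-- A Toeplitz sequence. -/
def IsToeplitzSeq {A : Type*} (x : ℤ → A) : Prop :=
  ∀ n : ℤ, ∃ p : ℕ, 0 < p ∧ ∀ k : ℤ, x (n + k * p) = x n

/-- A Toeplitz subshift: the shift-orbit closure of a Toeplitz sequence. -/
def IsToeplitzSubshift {A : Type*} [TopologicalSpace A] (X : Set (ℤ → A)) : Prop :=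
  ∃ x : ℤ → A, IsToeplitzSeq x ∧ X = closure {z | SSameOrbit x z}

/-! ### General topological dynamical systems -/

/-- The (full) orbit of `x` under the invertible map `T`. -/
def orbitEq {X : Type*} (T : Equiv.Perm X) (x : X) : Set X := {y | ∃ n : ℤ, (T ^ n) x = y}

/-- `x` and `y` are (left) asymptotic for `T`: `dist (T⁻ⁿ x) (T⁻ⁿ y) → 0` as `n → ∞`. -/
def MAsymp {X : Type*} [MetricSpace X] (T : Equiv.Perm X) (x y : X) : Prop :=
  Tendsto (fun n : ℕ => dist ((T ^ (-(n : ℤ))) x) ((T ^ (-(n : ℤ))) y)) atTop (𝓝 0)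

/-- The orbits of `x` and `y` are asymptotic. -/
def MOrbAsymp {X : Type*} [MetricSpace X] (T : Equiv.Perm X) (x y : X) : Prop :=
  ∃ n n' : ℤ, MAsymp T ((T ^ n) x) ((T ^ n') y)

/-- `C` is an asymptotic component of the system `(X, T)`: the `MOrbAsymp`-class of some
point `x`, containing at least two distinct orbits. -/
def MIsAsymComponent {X : Type*} [MetricSpace X] (T : Equiv.Perm X) (C : Set X) : Prop :=
  ∃ x, C = {y | MOrbAsymp T x y} ∧ ∃ y, MOrbAsymp T x y ∧ y ∉ orbitEq T x

/-- A minimal Cantor system: the compact metric space `X` is a Cantor space (nonempty,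
totally disconnected, without isolated points) and every `T`-orbit is dense. -/
def IsMinimalCantor {X : Type*} [MetricSpace X] (T : X ≃ₜ X) : Prop :=
  CompactSpace X ∧ TotallyDisconnectedSpace X ∧ Nonempty X ∧
    (∀ x : X, Filter.NeBot (𝓝[≠] x)) ∧ ∀ x : X, Dense (orbitEq T.toEquiv x)

/-- Strong orbit equivalence of the systems `(X, T)` and `(Y, S)`: an orbit equivalence
whose two orbit cocycles each have at most one point of discontinuity. -/
def IsSOE {X Y : Type*} [TopologicalSpace X] [TopologicalSpace Y]
    (T : X ≃ₜ X) (S : Y ≃ₜ Y) : Prop :=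
  ∃ φ : X ≃ₜ Y,
    (∀ x : X, φ '' orbitEq T.toEquiv x = orbitEq S.toEquiv (φ x)) ∧
    ∃ α β : X → ℤ,
      (∀ x, φ (T x) = (S.toEquiv ^ α x) (φ x)) ∧
      (∀ x, φ ((T.toEquiv ^ β x) x) = S (φ x)) ∧
      {x | ¬ContinuousAt α x}.Subsingleton ∧
      {x | ¬ContinuousAt β x}.Subsingleton

/-- The automorphism group of a system `(Y, S)`, as a subgroup of the permutation group:
the bi-continuous bijections commuting with `S`. -/
def autGroup {Y : Type*} [TopologicalSpace Y] (S : Y ≃ₜ Y) : Subgroup (Equiv.Perm Y) where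
  carrier := {φ | Continuous φ ∧ Continuous φ.symm ∧ ∀ y, φ (S y) = S (φ y)}
  one_mem' := ⟨continuous_id, continuous_id, fun _ => rfl⟩
  mul_mem' := by
    rintro a b ⟨ha1, ha2, ha3⟩ ⟨hb1, hb2, hb3⟩
    refine ⟨ha1.comp hb1, hb2.comp ha2, fun y => ?_⟩
    simp only [Equiv.Perm.mul_apply, hb3, ha3]
  inv_mem' := by
    rintro a ⟨ha1, ha2, ha3⟩
    refine ⟨by simpa using ha2, by exact ha1, fun y => ?_⟩
    have h : a (S (a⁻¹ y)) = S y := by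
      rw [ha3 (a⁻¹ y)]; exact congrArg S (a.apply_symm_apply y)
    calc a⁻¹ (S y) = a⁻¹ (a (S (a⁻¹ y))) := by rw [h]
    _ = S (a⁻¹ y) := a.symm_apply_apply _

/-! ### S-adic subshifts and Property (P_k) -/

/-- The word `x_a x_{a+1} … x_{a+len-1}` read in the bi-infinite sequence `x`. -/
def factorWord {A : Type*} (x : ℤ → A) (a : ℤ) (len : ℕ) : List A :=
  (List.range len).map fun t => x (a + t)

/-- `tauIter τ n d a = (τ_n ∘ τ_{n+1} ∘ … ∘ τ_{n+d-1}) (a)`: the image of the letter `a`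
of level `n + d` under the composition of the directive sequence down to level `n`.
In particular `tauIter τ 0 n` is `τ_{[0,n)}`. -/
def tauIter (τ : ℕ → ℕ → List ℕ) (n : ℕ) : ℕ → ℕ → List ℕ
  | 0, a => [a]
  | d + 1, a => (τ (n + d) a).flatMap (tauIter τ n d)

/-- The S-adic subshift generated by the directive sequence `τ` at level `n`
(the level-`n` alphabet consists of the naturals `< m n`). -/
def SAdicLevel (m : ℕ → ℕ) (τ : ℕ → ℕ → List ℕ) (n : ℕ) : Set (ℤ → ℕ) :=
  {x | (∀ i, x i < m n) ∧
    ∀ (a : ℤ) (len : ℕ), ∃ N c, n < N ∧ c < m N ∧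
      factorWord x a len <:+: tauIter τ n (N - n) c}

/-- The prescribed prefix `v_1² v_2² … v_{a}² v_{a+1} … v_{k+1}` in `0`-based letters:
letters `0, …, a-1` doubled, followed by the letters `a, …, k`. -/
def pkPrefix (k a : ℕ) : List ℕ :=
  (List.range a).flatMap (fun j => [j, j]) ++ (List.range (k + 1 - a)).map (fun j => a + j)

/-- Property `(P_k)` for a directive sequence `τ` with alphabet sizes `m`: `τ₀` is a
(non-erasing) hat morphism and, for every `n ≥ 1`, `τ_n` is primitive, has the prescribed
prefixes, ends with the last letter of the level-`n` alphabet, and no image contains the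
word (last letter)(first letter).  Level-`n` letters are `0, 1, …, m n - 1`, so the
letter `v_{i,n}` of the paper is `i - 1`. -/
def PropertyPk (k : ℕ) (m : ℕ → ℕ) (τ : ℕ → ℕ → List ℕ) : Prop :=
  (∀ n, 1 ≤ n → k < m n) ∧
  (∀ n a, a < m (n + 1) → τ n a ≠ [] ∧ ∀ c ∈ τ n a, c < m n) ∧
  (∀ a b, a < m 1 → b < m 1 → a ≠ b → ∀ c, c ∈ τ 0 a → c ∉ τ 0 b) ∧
  (∀ n, 1 ≤ n → ∀ a, a < m (n + 1) → ∀ b, b < m n → b ∈ τ n a) ∧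
  (∀ n, 1 ≤ n → ∀ a, a ≤ k → pkPrefix k a <+: τ n a) ∧
  (∀ n, 1 ≤ n → ∀ a, k < a → a < m (n + 1) → (List.replicate (a + 1) 0 ++ [1]) <+: τ n a) ∧
  (∀ n, 1 ≤ n → ∀ a, a < m (n + 1) →
    ([m n - 1] <:+ τ n a ∧ ¬ ([m n - 1, 0] <:+: τ n a)))

/-- Property `(P_∞)`: as `(P_k)` but with `k` replaced by `n` at level `n`. -/
def PropertyPinf (m : ℕ → ℕ) (τ : ℕ → ℕ → List ℕ) : Prop :=
  (∀ n, 1 ≤ n → n < m n) ∧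
  (∀ n a, a < m (n + 1) → τ n a ≠ [] ∧ ∀ c ∈ τ n a, c < m n) ∧
  (∀ a b, a < m 1 → b < m 1 → a ≠ b → ∀ c, c ∈ τ 0 a → c ∉ τ 0 b) ∧
  (∀ n, 1 ≤ n → ∀ a, a < m (n + 1) → ∀ b, b < m n → b ∈ τ n a) ∧
  (∀ n, 1 ≤ n → ∀ a, a ≤ n → pkPrefix n a <+: τ n a) ∧
  (∀ n, 1 ≤ n → ∀ a, n < a → a < m (n + 1) → (List.replicate (a + 1) 0 ++ [1]) <+: τ n a) ∧
  (∀ n, 1 ≤ n → ∀ a, a < m (n + 1) →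
    ([m n - 1] <:+ τ n a ∧ ¬ ([m n - 1, 0] <:+: τ n a)))

/-- The (integer) position in the concatenation `σ(y)` at which the block `σ(y_j)` starts,
the block `σ(y_0)` starting at position `0`. -/
def cumLen (σ : ℕ → List ℕ) (y : ℤ → ℕ) (j : ℤ) : ℤ :=
  if 0 ≤ j then ((List.range j.toNat).map fun t => ((σ (y t)).length : ℤ)).sum
  else -(((List.range (-j).toNat).map fun t => ((σ (y (j + t))).length : ℤ)).sum)

/-- `x = S^r (σ(y))`, where `σ(y) = … σ(y_{-1}).σ(y_0) σ(y_1) …` is the concatenated image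
of the bi-infinite sequence `y` (block `σ(y_0)` starting at coordinate `0`): for every `j`,
the word `σ(y_j)` is read in `x` starting at position `cumLen σ y j - r`. -/
def IsShiftedImage (σ : ℕ → List ℕ) (y : ℤ → ℕ) (r : ℤ) (x : ℤ → ℕ) : Prop :=
  ∀ j : ℤ, factorWord x (cumLen σ y j - r) (σ (y j)).length = σ (y j)

section Words

variable {A : Type*}

/- `factorWord` and `cumLen` cast `List.range` to a list of integers through the list monad;
`factorWord_eq_map` and `cumLen_eq` remove that cast. -/
theorem factorWord_eq_map (x : ℤ → A) (a : ℤ) (len : ℕ) :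
    factorWord x a len = (List.range len).map fun t : ℕ => x (a + t) := by
  simp [factorWord, ← List.map_eq_flatMap]

theorem factorWord_length (x : ℤ → A) (a : ℤ) (len : ℕ) :
    (factorWord x a len).length = len := by
  simp [factorWord_eq_map]

theorem factorWord_getD (x : ℤ → ℕ) (a : ℤ) {len t : ℕ} (ht : t < len) :
    (factorWord x a len).getD t 0 = x (a + t) := by
  rw [factorWord_eq_map, List.getD_eq_getElem _ _ (by simpa using ht)]
  simp

theorem factorWord_eq_of_getD {x : ℤ → ℕ} {a : ℤ} {l : List ℕ}
    (h : ∀ t : ℕ, t < l.length → x (a + t) = l.getD t 0) : factorWord x a l.length = l := by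
  refine List.ext_getElem (factorWord_length x a _) fun t h₁ h₂ => ?_
  rw [← List.getD_eq_getElem _ 0 h₁, ← List.getD_eq_getElem _ 0 h₂, factorWord_getD _ _ h₂,
    h t h₂]

theorem factorWord_congr {x y : ℤ → A} {a b : ℤ} {len : ℕ}
    (h : ∀ t : ℕ, t < len → x (a + t) = y (b + t)) :
    factorWord x a len = factorWord y b len := by
  simp only [factorWord_eq_map]
  exact List.map_congr_left fun t ht => h t (List.mem_range.1 ht)

theorem factorWord_add (x : ℤ → A) (a : ℤ) (len₁ len₂ : ℕ) :
    factorWord x a (len₁ + len₂) = factorWord x a len₁ ++ factorWord x (a + len₁) len₂ := by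
  simp only [factorWord_eq_map, List.range_add, List.map_append, List.map_map]
  congr 1
  refine List.map_congr_left fun t _ => ?_
  simp [add_assoc]

theorem factorWord_sshift (k : ℤ) (x : ℤ → A) (a : ℤ) (len : ℕ) :
    factorWord (SShift k x) a len = factorWord x (a + k) len :=
  factorWord_congr fun t _ => by simp only [SShift]; ring_nf

theorem factorWord_eq_middle {x : ℤ → A} {a : ℤ} {u v w : List A}
    (h : factorWord x a (u ++ v ++ w).length = u ++ v ++ w) :
    factorWord x (a + u.length) v.length = v := by
  rw [List.length_append, List.length_append, factorWord_add, factorWord_add] at h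
  exact (List.append_inj (List.append_inj h (by simp [factorWord_length])).1
    (by simp [factorWord_length])).2

theorem prefix_of_factorWord_eq {X Y : ℤ → A} {q : ℤ} {u v : List A}
    (hu : factorWord X q u.length = u) (hv : factorWord Y q v.length = v)
    (hle : u.length ≤ v.length) (hXY : ∀ t : ℕ, t < u.length → X (q + t) = Y (q + t)) :
    u <+: v := by
  obtain ⟨k, hk⟩ := Nat.exists_eq_add_of_le hle
  rw [hk, factorWord_add, ← factorWord_congr hXY, hu] at hv
  exact hv ▸ List.prefix_append u _

end Words

theorem eq_of_sub_succ_eq {f g : ℤ → ℤ} (h₀ : f 0 = g 0)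
    (h : ∀ j, f (j + 1) - f j = g (j + 1) - g j) (j : ℤ) : f j = g j := by
  induction j using Int.induction_on with
  | zero => exact h₀
  | succ k ih => have := h k; omega
  | pred k ih => have := h (-k - 1); simp only [sub_add_cancel] at this; omega

section CumLen

variable (σ : ℕ → List ℕ) (y : ℤ → ℕ)

theorem cumLen_eq (j : ℤ) :
    cumLen σ y j = if 0 ≤ j
      then ((List.range j.toNat).map fun t : ℕ => ((σ (y t)).length : ℤ)).sum
      else -((List.range (-j).toNat).map fun t : ℕ => ((σ (y (j + t))).length : ℤ)).sum := by
  simp [cumLen, ← List.map_eq_flatMap, Function.comp_def]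

@[simp]
theorem cumLen_zero : cumLen σ y 0 = 0 := by simp [cumLen_eq]

theorem cumLen_succ (j : ℤ) : cumLen σ y (j + 1) = cumLen σ y j + (σ (y j)).length := by
  rw [cumLen_eq, cumLen_eq]
  rcases lt_trichotomy j (-1) with hj | rfl | hj
  · rw [if_neg (by omega), if_neg (by omega), show (-j).toNat = (-(j + 1)).toNat + 1 by omega,
      List.range_succ_eq_map, List.map_cons, List.sum_cons, List.map_map]
    simp only [Function.comp_def, Nat.cast_succ]
    ring_nf
  · simp
  · rw [if_pos (by omega), if_pos (by omega), show (j + 1).toNat = j.toNat + 1 by omega,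
      List.range_succ, List.map_append, List.sum_append]
    simp [Int.toNat_of_nonneg (by omega : 0 ≤ j)]

theorem cumLen_one : cumLen σ y 1 = (σ (y 0)).length := by
  simpa using cumLen_succ σ y 0

theorem cumLen_add_nat (a : ℤ) (len : ℕ) :
    cumLen σ y (a + len) =
      cumLen σ y a + ((List.range len).map fun t : ℕ => ((σ (y (a + t))).length : ℤ)).sum := by
  induction len with
  | zero => simp
  | succ len ih =>
    rw [Nat.cast_succ, ← add_assoc, cumLen_succ, ih, List.range_succ, List.map_append,
      List.sum_append]
    simp [add_assoc]

theorem cumLen_sshift (k j : ℤ) :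
    cumLen σ (SShift k y) j = cumLen σ y (j + k) - cumLen σ y k := by
  refine eq_of_sub_succ_eq (f := cumLen σ (SShift k y))
    (g := fun j => cumLen σ y (j + k) - cumLen σ y k) (by simp) (fun j => ?_) j
  rw [cumLen_succ, show j + 1 + k = j + k + 1 by ring, cumLen_succ, SShift]
  ring

end CumLen

section Blocks

variable {σ : ℕ → List ℕ} {y x : ℤ → ℕ} {r : ℤ}

def blockStart (σ : ℕ → List ℕ) (y : ℤ → ℕ) (r j : ℤ) : ℤ := cumLen σ y j - r

theorem blockStart_succ (j : ℤ) :
    blockStart σ y r (j + 1) = blockStart σ y r j + (σ (y j)).length := by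
  simp only [blockStart, cumLen_succ]; ring

@[simp]
theorem blockStart_zero : blockStart σ y r 0 = -r := by simp [blockStart]

theorem blockStart_one : blockStart σ y r 1 = (σ (y 0)).length - r := by
  simp [blockStart, cumLen_one]

theorem blockStart_offset_zero (j : ℤ) : blockStart σ y 0 j = cumLen σ y j := sub_zero _

section NonErasing

variable (hne : ∀ j, σ (y j) ≠ [])
include hne

theorem cumLen_strictMono : StrictMono (cumLen σ y) :=
  strictMono_int_of_lt_succ fun j => by
    rw [cumLen_succ]; have := List.length_pos_iff.2 (hne j); omega

theorem blockStart_strictMono : StrictMono (blockStart σ y r) := fun _ _ h =>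
  sub_lt_sub_right (cumLen_strictMono hne h) r

theorem blockStart_add_le {i j : ℤ} (hij : i ≤ j) :
    blockStart σ y r i + (j - i) ≤ blockStart σ y r j := by
  induction j, hij using Int.leInduction with
  | base => simp
  | succ j _ ih => rw [blockStart_succ]; have := List.length_pos_iff.2 (hne j); omega

theorem exists_blockStart_lt (c : ℤ) : ∃ j, blockStart σ y r j < c :=
  ⟨min 0 (c - blockStart σ y r 0 - 1), by
    have := blockStart_add_le (r := r) hne (min_le_left 0 (c - blockStart σ y r 0 - 1))
    omega⟩

theorem exists_lt_blockStart (c : ℤ) : ∃ j, c < blockStart σ y r j :=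
  ⟨max 0 (c - blockStart σ y r 0 + 1), by
    have := blockStart_add_le (r := r) hne (le_max_left 0 (c - blockStart σ y r 0 + 1))
    omega⟩

theorem exists_mem_block (p : ℤ) :
    ∃ j, blockStart σ y r j ≤ p ∧ p < blockStart σ y r (j + 1) := by
  obtain ⟨b, hb⟩ := exists_lt_blockStart (r := r) hne p
  obtain ⟨a, ha⟩ := exists_blockStart_lt (r := r) hne (p + 1)
  obtain ⟨j, hj, hmax⟩ := Int.exists_greatest_of_bdd (P := fun j => blockStart σ y r j ≤ p)
    ⟨b, fun i hi => ((blockStart_strictMono (r := r) hne).lt_iff_lt.1 (by omega)).le⟩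
    ⟨a, by omega⟩
  exact ⟨j, hj, not_le.1 fun h => (hmax (j + 1) h).not_gt (lt_add_one j)⟩

theorem eq_of_mem_block {p j j' : ℤ}
    (h : blockStart σ y r j ≤ p ∧ p < blockStart σ y r (j + 1))
    (h' : blockStart σ y r j' ≤ p ∧ p < blockStart σ y r (j' + 1)) : j = j' := by
  have := (blockStart_strictMono (r := r) hne).lt_iff_lt (a := j) (b := j' + 1)
  have := (blockStart_strictMono (r := r) hne).lt_iff_lt (a := j') (b := j + 1)
  omega

end NonErasing

theorem IsShiftedImage.apply_blockStart_add (h : IsShiftedImage σ y r x) (j : ℤ) {o : ℕ}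
    (ho : o < (σ (y j)).length) : x (blockStart σ y r j + o) = (σ (y j)).getD o 0 := by
  rw [← h j, factorWord_getD _ _ ho, blockStart]

theorem IsShiftedImage.apply_blockStart_sub_one (h : IsShiftedImage σ y r x)
    (hne : ∀ j, σ (y j) ≠ []) (j : ℤ) :
    x (blockStart σ y r j - 1) = (σ (y (j - 1))).getD ((σ (y (j - 1))).length - 1) 0 := by
  have hlen := List.length_pos_iff.2 (hne (j - 1))
  rw [← h.apply_blockStart_add (j - 1) (Nat.sub_lt hlen one_pos)]
  congr 1
  have := blockStart_succ (σ := σ) (y := y) (r := r) (j - 1)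
  rw [sub_add_cancel] at this
  omega

theorem IsShiftedImage.sshift (h : IsShiftedImage σ y r x) (k : ℤ) :
    IsShiftedImage σ y (r + k) (SShift k x) := fun j => by
  rw [factorWord_sshift, sub_add_eq_sub_sub, sub_add_cancel]
  exact h j

def IsCenteredImage (σ : ℕ → List ℕ) (y : ℤ → ℕ) (r : ℤ) (x : ℤ → ℕ) : Prop :=
  IsShiftedImage σ y r x ∧ 0 ≤ r ∧ r < (σ (y 0)).length

theorem IsCenteredImage.zero_mem_block (h : IsCenteredImage σ y r x) :
    blockStart σ y r 0 ≤ 0 ∧ 0 < blockStart σ y r 1 := by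
  obtain ⟨-, h₀, h₁⟩ := h
  rw [blockStart_zero, blockStart_one]; omega

theorem IsCenteredImage.apply_zero (h : IsCenteredImage σ y r x) :
    x 0 = (σ (y 0)).getD r.toNat 0 := by
  obtain ⟨h, h₀, h₁⟩ := h
  have := h.apply_blockStart_add 0 (o := r.toNat) (by omega)
  rwa [blockStart_zero, show -r + (r.toNat : ℤ) = 0 by omega] at this

theorem IsShiftedImage.isCenteredImage_sshift (h : IsShiftedImage σ y r x) {k : ℤ}
    (hk : blockStart σ y r k ≤ 0 ∧ 0 < blockStart σ y r (k + 1)) :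
    IsCenteredImage σ (SShift k y) (r - cumLen σ y k) x := by
  rw [blockStart_succ, blockStart] at hk
  refine ⟨fun j => ?_, by omega, by simp only [SShift, zero_add]; omega⟩
  rw [cumLen_sshift, sub_sub_sub_cancel_right]
  exact h (j + k)

end Blocks

section Concat

variable {ν σ : ℕ → List ℕ} {w : ℤ → ℕ}

noncomputable def blockIndex (ν : ℕ → List ℕ) (w : ℤ → ℕ) (p : ℤ) : ℤ :=
  Classical.epsilon fun j => blockStart ν w 0 j ≤ p ∧ p < blockStart ν w 0 (j + 1)

/-- The sequence `ν(w) = … ν(w_{-1}).ν(w_0) ν(w_1) …`, with `ν(w_0)` starting at `0`. -/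
noncomputable def concatSeq (ν : ℕ → List ℕ) (w : ℤ → ℕ) (p : ℤ) : ℕ :=
  (ν (w (blockIndex ν w p))).getD (p - cumLen ν w (blockIndex ν w p)).toNat 0

variable (hne : ∀ j, ν (w j) ≠ [])
include hne

theorem concatSeq_cumLen_add (j : ℤ) {o : ℕ} (ho : o < (ν (w j)).length) :
    concatSeq ν w (cumLen ν w j + o) = (ν (w j)).getD o 0 := by
  have hj : blockStart ν w 0 j ≤ cumLen ν w j + o ∧
      cumLen ν w j + o < blockStart ν w 0 (j + 1) := by
    rw [blockStart_succ, blockStart_offset_zero]; omega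
  have hidx : blockIndex ν w (cumLen ν w j + o) = j :=
    eq_of_mem_block hne (Classical.epsilon_spec (p := fun i => blockStart ν w 0 i ≤ _ ∧
      _ < blockStart ν w 0 (i + 1)) ⟨j, hj⟩) hj
  rw [concatSeq, hidx]
  congr 1
  omega

theorem isShiftedImage_concatSeq : IsShiftedImage ν w 0 (concatSeq ν w) := fun j => by
  rw [sub_zero]
  exact factorWord_eq_of_getD fun t ht => concatSeq_cumLen_add hne j ht

theorem exists_concatSeq_mem (p : ℤ) : ∃ j, concatSeq ν w p ∈ ν (w j) := by
  obtain ⟨j, hj⟩ := exists_mem_block (r := 0) hne p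
  rw [blockStart_succ, blockStart_offset_zero] at hj
  have ho : (p - cumLen ν w j).toNat < (ν (w j)).length := by omega
  refine ⟨j, ?_⟩
  rw [show p = cumLen ν w j + (p - cumLen ν w j).toNat by omega, concatSeq_cumLen_add hne j ho]
  exact List.getD_eq_getElem _ _ ho ▸ List.getElem_mem ho

theorem sum_length_concatSeq (j : ℤ) {o : ℕ} (ho : o ≤ (ν (w j)).length) :
    ((List.range o).map fun t : ℕ => ((σ (concatSeq ν w (cumLen ν w j + t))).length : ℤ)).sum =
      ((((ν (w j)).take o).flatMap σ).length : ℤ) := by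
  induction o with
  | zero => simp
  | succ o ih =>
    have ho' : o < (ν (w j)).length := by omega
    rw [List.range_succ, List.map_append, List.sum_append, ih ho'.le, List.take_add_one,
      List.getElem?_eq_getElem ho', List.flatMap_append, List.length_append]
    simp [concatSeq_cumLen_add hne j ho', List.getElem?_eq_getElem ho']

theorem cumLen_flatMap (j : ℤ) :
    cumLen (fun a => (ν a).flatMap σ) w j = cumLen σ (concatSeq ν w) (cumLen ν w j) := by
  refine eq_of_sub_succ_eq (f := cumLen (fun a => (ν a).flatMap σ) w)
    (g := fun j => cumLen σ (concatSeq ν w) (cumLen ν w j)) (by simp) (fun j => ?_) j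
  rw [cumLen_succ _ _ j, cumLen_succ ν w j, cumLen_add_nat, sum_length_concatSeq hne j le_rfl,
    List.take_length]
  ring

theorem IsShiftedImage.of_flatMap {r : ℤ} {x : ℤ → ℕ}
    (h : IsShiftedImage (fun a => (ν a).flatMap σ) w r x) :
    IsShiftedImage σ (concatSeq ν w) r x := by
  intro q
  obtain ⟨j, hj⟩ := exists_mem_block (r := 0) hne q
  rw [blockStart_succ, blockStart_offset_zero] at hj
  set o := (q - cumLen ν w j).toNat
  have hq : q = cumLen ν w j + o := by omega
  have ho : o < (ν (w j)).length := by omega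
  have hblock := h j
  beta_reduce at hblock
  rw [← List.take_append_drop o (ν (w j)), List.drop_eq_getElem_cons ho, List.flatMap_append,
    List.flatMap_cons, ← List.append_assoc] at hblock
  have hmid := factorWord_eq_middle hblock
  rw [cumLen_flatMap hne, ← sum_length_concatSeq hne j ho.le, sub_add_eq_add_sub,
    ← cumLen_add_nat, ← hq] at hmid
  rwa [hq, concatSeq_cumLen_add hne j ho, List.getD_eq_getElem _ _ ho, ← hq]

end Concat

def IsPrefixCodeOn (σ : ℕ → List ℕ) (S : Set ℕ) : Prop :=
  ∀ a ∈ S, ∀ b ∈ S, σ a <+: σ b → a = b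

def CommonCutsUnbounded (σ : ℕ → List ℕ) (w₁ : ℤ → ℕ) (r₁ : ℤ) (w₂ : ℤ → ℕ) (r₂ : ℤ) : Prop :=
  ∀ c, ∃ a b, blockStart σ w₁ r₁ a = blockStart σ w₂ r₂ b ∧ blockStart σ w₁ r₁ a < c

section Sync

variable {σ : ℕ → List ℕ} {S : Set ℕ} {X Y w₁ w₂ : ℤ → ℕ} {r₁ r₂ : ℤ}
  (hσ : IsPrefixCodeOn σ S) (hw₁ : ∀ j, w₁ j ∈ S) (hw₂ : ∀ j, w₂ j ∈ S)
include hσ hw₁ hw₂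

theorem IsShiftedImage.sync_step (h₁ : IsShiftedImage σ w₁ r₁ X)
    (h₂ : IsShiftedImage σ w₂ r₂ Y) {c : ℤ} (hXY : ∀ i < c, X i = Y i) {a b : ℤ}
    (hab : blockStart σ w₁ r₁ a = blockStart σ w₂ r₂ b)
    (hc : blockStart σ w₁ r₁ a + min ((σ (w₁ a)).length : ℤ) (σ (w₂ b)).length ≤ c) :
    w₁ a = w₂ b ∧ blockStart σ w₁ r₁ (a + 1) = blockStart σ w₂ r₂ (b + 1) := by
  have e₁ : factorWord X (blockStart σ w₁ r₁ a) (σ (w₁ a)).length = σ (w₁ a) := h₁ a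
  have e₂ : factorWord Y (blockStart σ w₁ r₁ a) (σ (w₂ b)).length = σ (w₂ b) := by
    rw [hab]; exact h₂ b
  have hletter : w₁ a = w₂ b := by
    rcases le_total (σ (w₁ a)).length (σ (w₂ b)).length with hL | hL
    · exact hσ _ (hw₁ a) _ (hw₂ b)
        (prefix_of_factorWord_eq e₁ e₂ hL fun t ht => hXY _ (by omega))
    · exact (hσ _ (hw₂ b) _ (hw₁ a)
        (prefix_of_factorWord_eq e₂ e₁ hL fun t ht => (hXY _ (by omega)).symm)).symm
  exact ⟨hletter, by rw [blockStart_succ, blockStart_succ, hab, hletter]⟩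

theorem IsShiftedImage.sync_forward (h₁ : IsShiftedImage σ w₁ r₁ X)
    (h₂ : IsShiftedImage σ w₂ r₂ Y) (hXY : ∀ i < 0, X i = Y i) {a b : ℤ}
    (hab : blockStart σ w₁ r₁ a = blockStart σ w₂ r₂ b) (k : ℕ)
    (hk : blockStart σ w₁ r₁ (a + k) ≤ 0 ∨ blockStart σ w₂ r₂ (b + k) ≤ 0) :
    blockStart σ w₁ r₁ (a + k) = blockStart σ w₂ r₂ (b + k) ∧
      ∀ l < k, w₁ (a + l) = w₂ (b + l) := by
  induction k with
  | zero => simpa using hab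
  | succ k ih =>
    push_cast at hk ⊢
    rw [← add_assoc, ← add_assoc, blockStart_succ, blockStart_succ] at hk ⊢
    obtain ⟨hstart, hletters⟩ := ih (by omega)
    obtain ⟨hletter, -⟩ := h₁.sync_step hσ hw₁ hw₂ h₂ hXY hstart (by omega)
    refine ⟨by rw [hstart, hletter], fun l hl => ?_⟩
    rcases (Nat.lt_succ_iff.1 hl).lt_or_eq with hl | rfl
    exacts [hletters l hl, hletter]

variable (hS : ∀ a ∈ S, σ a ≠ [])
include hS

/- Marching forward from a common cut far to the left, both factorizations read the same
letters; as both are centered, the two marches reach the block containing `0` together. -/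
theorem IsCenteredImage.sync_past (h₁ : IsCenteredImage σ w₁ r₁ X)
    (h₂ : IsCenteredImage σ w₂ r₂ Y) (hXY : ∀ i < 0, X i = Y i)
    (hcut : CommonCutsUnbounded σ w₁ r₁ w₂ r₂) : r₁ = r₂ ∧ ∀ j < 0, w₁ j = w₂ j := by
  have mono₁ := blockStart_strictMono (r := r₁) fun j => hS _ (hw₁ j)
  have mono₂ := blockStart_strictMono (r := r₂) fun j => hS _ (hw₂ j)
  obtain ⟨hc₁, hc₁'⟩ := h₁.zero_mem_block
  obtain ⟨hc₂, hc₂'⟩ := h₂.zero_mem_block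
  have key (j : ℤ) (hj : j ≤ 0) : r₁ = r₂ ∧ ∀ i, j ≤ i → i < 0 → w₁ i = w₂ i := by
    obtain ⟨a, b, hab, hlt⟩ := hcut (min (blockStart σ w₁ r₁ j) (blockStart σ w₂ r₂ 0))
    have ha : a < j := mono₁.lt_iff_lt.1 (by omega)
    have hb : b < 0 := mono₂.lt_iff_lt.1 (by omega)
    have march := h₁.1.sync_forward hσ hw₁ hw₂ h₂.1 hXY hab
    obtain ⟨h₁₀, hletters⟩ := march (-a).toNat (by rw [show a + (-a).toNat = 0 by omega]; omega)
    obtain ⟨h₂₀, -⟩ := march (-b).toNat (by rw [show b + (-b).toNat = 0 by omega]; omega)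
    rw [show a + (-a).toNat = 0 by omega] at h₁₀
    rw [show b + (-b).toNat = 0 by omega] at h₂₀
    obtain rfl : b = a := by
      by_contra hne
      rcases lt_or_gt_of_ne hne with h | h
      · have := mono₁.le_iff_le.2 (show 1 ≤ a + (-b).toNat by omega); omega
      · have := mono₂.le_iff_le.2 (show 1 ≤ b + (-a).toNat by omega); omega
    rw [show b + (-b).toNat = 0 by omega] at h₁₀
    refine ⟨by simpa using h₁₀, fun i hji hi => ?_⟩
    have := hletters (i - b).toNat (by omega)
    rwa [show b + ((i - b).toNat : ℤ) = i by omega] at this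
  exact ⟨(key 0 le_rfl).1, fun j hj => (key j hj.le).2 j le_rfl hj⟩

theorem IsCenteredImage.eq_of_cuts (h₁ : IsCenteredImage σ w₁ r₁ X)
    (h₂ : IsCenteredImage σ w₂ r₂ X) (hcut : CommonCutsUnbounded σ w₁ r₁ w₂ r₂) : w₁ = w₂ := by
  obtain ⟨rfl, hpast⟩ := h₁.sync_past hσ hw₁ hw₂ hS h₂ (fun _ _ => rfl) hcut
  have hstep (k : ℤ) (hk : blockStart σ w₁ r₁ k = blockStart σ w₂ r₁ k) :=
    h₁.1.sync_step hσ hw₁ hw₂ h₂.1 (fun _ _ => rfl) hk le_rfl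
  have hstarts (k : ℕ) : blockStart σ w₁ r₁ k = blockStart σ w₂ r₁ k := by
    induction k with
    | zero => simp
    | succ k ih => exact_mod_cast (hstep k ih).2
  funext j
  rcases lt_or_ge j 0 with hj | hj
  · exact hpast j hj
  · lift j to ℕ using hj
    exact (hstep j (hstarts j)).1

end Sync

section Lists

theorem getD_eq_of_prefix {l₁ l₂ : List ℕ} (h : l₁ <+: l₂) {i : ℕ} (hi : i < l₁.length) :
    l₂.getD i 0 = l₁.getD i 0 := by
  rw [List.getD_eq_getElem _ 0 hi, List.getD_eq_getElem _ 0 (hi.trans_le h.length_le),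
    h.getElem hi]

theorem getD_mem {l : List ℕ} {o : ℕ} (ho : o < l.length) : l.getD o 0 ∈ l :=
  List.getD_eq_getElem _ _ ho ▸ List.getElem_mem ho

theorem getD_pair_infix {l : List ℕ} {o : ℕ} (ho : 1 ≤ o) (ho' : o < l.length) :
    [l.getD (o - 1) 0, l.getD o 0] <:+: l := by
  refine ⟨l.take (o - 1), l.drop (o + 1), ?_⟩
  conv_rhs => rw [← List.take_append_drop (o - 1) l]
  rw [List.drop_eq_getElem_cons (show o - 1 < l.length by omega), show o - 1 + 1 = o by omega,
    List.drop_eq_getElem_cons ho', List.getD_eq_getElem _ 0 (by omega),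
    List.getD_eq_getElem _ 0 ho']
  simp

theorem prefix_of_append_pair_prefix {l u : List ℕ} {e p : ℕ} (h : u ++ [e, p] <+: l) :
    u ++ [e] <+: l ∧ l.getD u.length 0 = e ∧ l.getD (u.length + 1) 0 = p := by
  refine ⟨List.IsPrefix.trans (by simp) h, ?_, ?_⟩
  · rw [getD_eq_of_prefix h (by simp)]; simp
  · rw [getD_eq_of_prefix h (by simp)]; simp

def ForksAfter (l₁ l₂ : List ℕ) (e : ℕ) : Prop :=
  ∃ (u : List ℕ) (p q : ℕ), u ++ [e, p] <+: l₁ ∧ u ++ [e, q] <+: l₂ ∧ p ≠ q ∧ min p q = e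

theorem ForksAfter.symm {l₁ l₂ : List ℕ} {e : ℕ} (h : ForksAfter l₁ l₂ e) :
    ForksAfter l₂ l₁ e :=
  let ⟨u, p, q, h₁, h₂, hpq, hmin⟩ := h
  ⟨u, q, p, h₂, h₁, hpq.symm, min_comm p q ▸ hmin⟩

def doubledRange (a : ℕ) : List ℕ := (List.range a).flatMap fun j => [j, j]

theorem doubledRange_succ (a : ℕ) : doubledRange (a + 1) = doubledRange a ++ [a, a] := by
  simp [doubledRange, List.range_succ]

theorem doubledRange_prefix {a b : ℕ} (h : a ≤ b) : doubledRange a <+: doubledRange b := by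
  induction b, h using Nat.le_induction with
  | base => exact List.prefix_refl _
  | succ b _ ih => exact ih.trans (doubledRange_succ b ▸ List.prefix_append _ _)

theorem doubledRange_append_prefix_pkPrefix {k a : ℕ} (h : a ≤ k) :
    doubledRange a ++ [a] <+: pkPrefix k a := by
  rw [pkPrefix, show k + 1 - a = k - a + 1 by omega, List.range_succ_eq_map]
  simp [doubledRange]

theorem doubledRange_append_pair_prefix_pkPrefix {k a : ℕ} (h : a < k) :
    doubledRange a ++ [a, a + 1] <+: pkPrefix k a := by
  rw [pkPrefix, show k + 1 - a = k - a - 1 + 1 + 1 by omega, List.range_succ_eq_map,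
    List.range_succ_eq_map]
  simp [doubledRange]

end Lists

/-- With `0`-based letters: `τ_n(b)` and `τ_n(c)` fork after this letter
(`PropertyPinf.forksAfter_signalLetter`). -/
def signalLetter (n b c : ℕ) : ℕ := if max b c ≤ n then min b c else 0

theorem signalLetter_comm (n b c : ℕ) : signalLetter n b c = signalLetter n c b := by
  simp [signalLetter, max_comm, min_comm]

theorem signalLetter_eq_min_of_pos {n b c : ℕ} (h : 0 < signalLetter n b c) :
    signalLetter n b c = min b c := by
  unfold signalLetter at *
  split_ifs at * <;> omega

theorem tauIter_one (τ : ℕ → ℕ → List ℕ) (n : ℕ) : tauIter τ n 1 = τ n := by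
  funext a
  simp [tauIter]

theorem tauIter_zero_succ (τ : ℕ → ℕ → List ℕ) (n : ℕ) :
    tauIter τ 0 (n + 1) = fun a => (τ n a).flatMap (tauIter τ 0 n) := by
  funext a
  simp [tauIter]

namespace PropertyPinf

variable {m : ℕ → ℕ} {τ : ℕ → ℕ → List ℕ} (hP : PropertyPinf m τ)
include hP

theorem lt_m {n : ℕ} (hn : 1 ≤ n) : n < m n := hP.1 n hn

theorem ne_nil {n a : ℕ} (ha : a < m (n + 1)) : τ n a ≠ [] := (hP.2.1 n a ha).1

theorem lt_of_mem {n a c : ℕ} (ha : a < m (n + 1)) (hc : c ∈ τ n a) : c < m n :=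
  (hP.2.1 n a ha).2 c hc

theorem eq_of_mem_tau_zero {a b c : ℕ} (ha : a < m 1) (hb : b < m 1) (hca : c ∈ τ 0 a)
    (hcb : c ∈ τ 0 b) : a = b :=
  by_contra fun hne => hP.2.2.1 a b ha hb hne c hca hcb

theorem mem {n a b : ℕ} (hn : 1 ≤ n) (ha : a < m (n + 1)) (hb : b < m n) : b ∈ τ n a :=
  hP.2.2.2.1 n hn a ha b hb

theorem pkPrefix_prefix {n a : ℕ} (hn : 1 ≤ n) (ha : a ≤ n) : pkPrefix n a <+: τ n a :=
  hP.2.2.2.2.1 n hn a ha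

theorem replicate_prefix {n a : ℕ} (hn : 1 ≤ n) (ha : n < a) (ha' : a < m (n + 1)) :
    List.replicate (a + 1) 0 ++ [1] <+: τ n a :=
  hP.2.2.2.2.2.1 n hn a ha ha'

theorem getD_length_sub_one {n a : ℕ} (hn : 1 ≤ n) (ha : a < m (n + 1)) :
    (τ n a).getD ((τ n a).length - 1) 0 = m n - 1 := by
  obtain ⟨l, hl⟩ := (hP.2.2.2.2.2.2 n hn a ha).1
  rw [← hl]
  simp

theorem not_marker_infix {n a : ℕ} (hn : 1 ≤ n) (ha : a < m (n + 1)) :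
    ¬ [m n - 1, 0] <:+: τ n a :=
  (hP.2.2.2.2.2.2 n hn a ha).2

theorem tauIter_ne_nil : ∀ {d a : ℕ}, a < m d → tauIter τ 0 d a ≠ []
  | 0, _, _ => List.cons_ne_nil _ _
  | d + 1, a, ha => by
    obtain ⟨b, hb⟩ := List.exists_mem_of_ne_nil _ (hP.ne_nil ha)
    simp only [tauIter, zero_add, ne_eq, List.flatMap_eq_nil_iff, not_forall]
    exact ⟨b, hb, tauIter_ne_nil (hP.lt_of_mem ha hb)⟩

theorem isPrefixCodeOn_zero : IsPrefixCodeOn (τ 0) {a | a < m 1} := fun _ ha _ hb hab =>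
  let ⟨_, hc⟩ := List.exists_mem_of_ne_nil _ (hP.ne_nil (n := 0) ha)
  hP.eq_of_mem_tau_zero ha hb hc (hab.subset hc)

theorem exists_replicate_prefix {n a : ℕ} (hn : 1 ≤ n) (ha : a < m (n + 1)) :
    ∃ k ≤ a, List.replicate (k + 1) 0 ++ [1] <+: τ n a := by
  rcases Nat.lt_or_ge n a with hna | han
  · exact ⟨a, le_rfl, hP.replicate_prefix hn hna ha⟩
  refine ⟨min a 1, by omega, List.IsPrefix.trans ?_ (hP.pkPrefix_prefix hn han)⟩
  rcases Nat.lt_trichotomy a 1 with ha₀ | rfl | ha₂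
  · obtain rfl : a = 0 := by omega
    simpa [doubledRange] using doubledRange_append_pair_prefix_pkPrefix (show 0 < n by omega)
  · simpa [doubledRange] using doubledRange_append_prefix_pkPrefix han
  · refine List.IsPrefix.trans ?_ (((doubledRange_prefix ha₂).trans
      (List.prefix_append _ _)).trans (doubledRange_append_prefix_pkPrefix han))
    simp [show min a 1 = 1 by omega, doubledRange, List.range_succ]

theorem getD_zero {n a : ℕ} (hn : 1 ≤ n) (ha : a < m (n + 1)) : (τ n a).getD 0 0 = 0 := by
  obtain ⟨k, -, hpre⟩ := hP.exists_replicate_prefix hn ha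
  rw [getD_eq_of_prefix hpre (by simp)]
  simp [List.replicate_succ]

theorem forksAfter_signalLetter_of_lt {n b c : ℕ} (hn : 1 ≤ n) (hb : b < m (n + 1))
    (hc : c < m (n + 1)) (hbc : b < c) : ForksAfter (τ n b) (τ n c) (signalLetter n b c) := by
  rcases le_or_gt c n with hcn | hcn
  · rw [show signalLetter n b c = b by simp [signalLetter, hcn, hbc.le]]
    refine ⟨doubledRange b, b + 1, b, ?_, ?_, by omega, by omega⟩
    · exact (doubledRange_append_pair_prefix_pkPrefix (by omega)).trans
        (hP.pkPrefix_prefix hn (by omega))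
    · rw [← doubledRange_succ]
      exact ((doubledRange_prefix hbc).trans (List.prefix_append _ _)).trans
        ((doubledRange_append_prefix_pkPrefix hcn).trans (hP.pkPrefix_prefix hn hcn))
  · rw [show signalLetter n b c = 0 by unfold signalLetter; split_ifs <;> omega]
    obtain ⟨k, hk, hpre⟩ := hP.exists_replicate_prefix hn hb
    refine ⟨List.replicate k 0, 1, 0, ?_, ?_, one_ne_zero, rfl⟩
    · simpa [List.replicate_succ'] using hpre
    · refine List.IsPrefix.trans ?_
        ((List.prefix_append _ [1]).trans (hP.replicate_prefix hn hcn hc))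
      rw [show c + 1 = k + 2 + (c - 1 - k) by omega, List.replicate_add]
      simp [List.replicate_succ']

theorem forksAfter_signalLetter {n b c : ℕ} (hn : 1 ≤ n) (hb : b < m (n + 1))
    (hc : c < m (n + 1)) (hbc : b ≠ c) : ForksAfter (τ n b) (τ n c) (signalLetter n b c) := by
  rcases hbc.lt_or_gt with h | h
  · exact hP.forksAfter_signalLetter_of_lt hn hb hc h
  · exact signalLetter_comm n c b ▸ (hP.forksAfter_signalLetter_of_lt hn hc hb h).symm

theorem isPrefixCodeOn_succ {n : ℕ} (hn : 1 ≤ n) :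
    IsPrefixCodeOn (τ n) {a | a < m (n + 1)} := by
  intro b hb c hc hbc
  by_contra hne
  obtain ⟨u, p, q, h₁, h₂, hpq, -⟩ := hP.forksAfter_signalLetter hn hb hc hne
  have := (List.prefix_of_prefix_length_le (h₁.trans hbc) h₂ (by simp)).eq_of_length (by simp)
  exact hpq (by simpa using this)

end PropertyPinf

theorem IsShiftedImage.exists_blockStart_of_not_infix {σ : ℕ → List ℕ} {w x : ℤ → ℕ} {s : ℤ}
    (h : IsShiftedImage σ w s x) (hne : ∀ j, σ (w j) ≠ []) {p : ℤ}
    (hp : ∀ j, ¬ [x (p - 1), x p] <:+: σ (w j)) : ∃ j, blockStart σ w s j = p := by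
  obtain ⟨j, hj⟩ := exists_mem_block (r := s) hne p
  rw [blockStart_succ] at hj
  obtain ⟨o, rfl⟩ : ∃ o : ℕ, p = blockStart σ w s j + o :=
    ⟨(p - blockStart σ w s j).toNat, by omega⟩
  rcases Nat.eq_zero_or_pos o with rfl | ho
  · exact ⟨j, by simp⟩
  · refine absurd ?_ (hp j)
    rw [h.apply_blockStart_add j (by omega), show blockStart σ w s j + o - 1 =
      blockStart σ w s j + (o - 1 : ℕ) by omega, h.apply_blockStart_add j (by omega)]
    exact getD_pair_infix ho (by omega)

theorem PropertyPinf.exists_blockStart_iff {m : ℕ → ℕ} {τ : ℕ → ℕ → List ℕ}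
    (hP : PropertyPinf m τ) {n : ℕ} (hn : 1 ≤ n) {w x : ℤ → ℕ} {s : ℤ}
    (hw : ∀ j, w j < m (n + 1)) (h : IsShiftedImage (τ n) w s x) (p : ℤ) :
    (∃ j, blockStart (τ n) w s j = p) ↔ x (p - 1) = m n - 1 ∧ x p = 0 := by
  have hne j : τ n (w j) ≠ [] := hP.ne_nil (hw j)
  constructor
  · rintro ⟨j, rfl⟩
    rw [h.apply_blockStart_sub_one hne, hP.getD_length_sub_one hn (hw _)]
    have := h.apply_blockStart_add j (List.length_pos_iff.2 (hne j))
    rw [Nat.cast_zero, add_zero, hP.getD_zero hn (hw j)] at this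
    exact ⟨rfl, this⟩
  · rintro ⟨hlast, hfirst⟩
    exact h.exists_blockStart_of_not_infix hne fun j hj =>
      hP.not_marker_infix hn (hw j) (hlast ▸ hfirst ▸ hj)

/-- Since `τ₀` is a hat morphism, such a position is a cut of every `τ₀`-factorization of `x`
(`IsShiftedImage.exists_blockStart_of_isClassChange`). -/
def IsClassChange (m : ℕ → ℕ) (τ : ℕ → ℕ → List ℕ) (x : ℤ → ℕ) (p : ℤ) : Prop :=
  ¬ ∃ a < m 1, x (p - 1) ∈ τ 0 a ∧ x p ∈ τ 0 a

theorem exists_ne_succ_of_ne {z : ℤ → ℕ} {a b : ℤ} (h : z a ≠ z b) :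
    ∃ i, min a b ≤ i ∧ i < max a b ∧ z i ≠ z (i + 1) := by
  wlog hab : a ≤ b generalizing a b
  · simpa [min_comm, max_comm] using this h.symm (by omega)
  by_contra! hcon
  have hconst : ∀ c, a ≤ c → c ≤ b → z a = z c := by
    intro c hac
    induction c, hac using Int.leInduction with
    | base => exact fun _ => rfl
    | succ c hac ih => exact fun hcb => (ih (by omega)).trans (hcon c (by omega) (by omega))
  exact h (hconst b hab le_rfl)

section ClassChange

variable {m : ℕ → ℕ} {τ : ℕ → ℕ → List ℕ} {w x : ℤ → ℕ} {s : ℤ}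

theorem IsShiftedImage.exists_blockStart_of_isClassChange (h : IsShiftedImage (τ 0) w s x)
    (hw : ∀ j, w j < m 1) (hne : ∀ j, τ 0 (w j) ≠ []) {p : ℤ}
    (hp : IsClassChange m τ x p) : ∃ j, blockStart (τ 0) w s j = p :=
  h.exists_blockStart_of_not_infix hne fun j hj =>
    hp ⟨w j, hw j, hj.subset (by simp), hj.subset (by simp)⟩

variable (hP : PropertyPinf m τ)
include hP

theorem PropertyPinf.isClassChange_blockStart_succ (h : IsShiftedImage (τ 0) w s x)
    (hw : ∀ j, w j < m 1) {i : ℤ} (hi : w i ≠ w (i + 1)) :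
    IsClassChange m τ x (blockStart (τ 0) w s (i + 1)) := by
  have hne j : τ 0 (w j) ≠ [] := hP.ne_nil (hw j)
  have hlen j := List.length_pos_iff.2 (hne j)
  rintro ⟨a, ha, hlast, hfirst⟩
  rw [h.apply_blockStart_sub_one hne, add_sub_cancel_right] at hlast
  have hfirst' := h.apply_blockStart_add (i + 1) (hlen (i + 1))
  rw [Nat.cast_zero, add_zero] at hfirst'
  rw [hfirst'] at hfirst
  exact hi ((hP.eq_of_mem_tau_zero ha (hw i) hlast
    (getD_mem (Nat.sub_lt (hlen i) one_pos))).symm.trans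
    (hP.eq_of_mem_tau_zero ha (hw _) hfirst (getD_mem (hlen _))))

/- By primitivity, every `τ₁(w_j)` contains both `0` and `m₁ - 1`, hence two consecutive
distinct letters, whose `τ₀`-images meet at a class change. -/
theorem PropertyPinf.exists_isClassChange_lt (hw : ∀ j, w j < m 2)
    (h : IsShiftedImage (tauIter τ 0 2) w s x) (c : ℤ) : ∃ p < c, IsClassChange m τ x p := by
  have hne₁ j : τ 1 (w j) ≠ [] := hP.ne_nil (hw j)
  set z := concatSeq (τ 1) w with hz_def
  have hz : IsShiftedImage (τ 0) z s x := by
    rw [tauIter_zero_succ, tauIter_one] at h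
    exact h.of_flatMap hne₁
  have hzlt i : z i < m 1 :=
    let ⟨j, hj⟩ := exists_concatSeq_mem hne₁ i
    hP.lt_of_mem (hw j) hj
  have hne₀ i : τ 0 (z i) ≠ [] := hP.ne_nil (hzlt i)
  obtain ⟨i₀, hi₀⟩ := exists_blockStart_lt (r := s) hne₀ c
  obtain ⟨j, hj⟩ := exists_blockStart_lt (r := 0) hne₁ i₀
  have hj' := cumLen_succ (τ 1) w (j - 1)
  rw [sub_add_cancel] at hj'
  rw [blockStart_offset_zero] at hj
  have hletter (b : ℕ) (hb : b < m 1) : ∃ o < (τ 1 (w (j - 1))).length,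
      z (cumLen (τ 1) w (j - 1) + o) = b := by
    obtain ⟨o, ho, hob⟩ := List.mem_iff_getElem.1 (hP.mem le_rfl (hw (j - 1)) hb)
    refine ⟨o, ho, ?_⟩
    rw [hz_def, concatSeq_cumLen_add hne₁ _ ho, List.getD_eq_getElem _ _ ho, hob]
  have hm₁ := hP.lt_m le_rfl
  obtain ⟨o₀, ho₀, hz₀⟩ := hletter 0 (by omega)
  obtain ⟨o₁, ho₁, hz₁⟩ := hletter (m 1 - 1) (by omega)
  have hdiff : z (cumLen (τ 1) w (j - 1) + o₀) ≠ z (cumLen (τ 1) w (j - 1) + o₁) := by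
    rw [hz₀, hz₁]; omega
  obtain ⟨i, -, hi, hchange⟩ := exists_ne_succ_of_ne hdiff
  refine ⟨_, ?_, hP.isClassChange_blockStart_succ hz hzlt hchange⟩
  have := (blockStart_strictMono (r := s) hne₀).lt_iff_lt.2 (show i + 1 < i₀ by omega)
  omega

end ClassChange

section Factorizations

variable {m : ℕ → ℕ} {τ : ℕ → ℕ → List ℕ}

def IsCenteredFactorization (m : ℕ → ℕ) (τ : ℕ → ℕ → List ℕ) (n : ℕ) (y : ℤ → ℕ) (r : ℤ)
    (x : ℤ → ℕ) : Prop :=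
  (∀ i, y i < m n) ∧ IsCenteredImage (tauIter τ 0 n) y r x

variable (hP : PropertyPinf m τ)
include hP

theorem PropertyPinf.commonCutsUnbounded_zero {X Y w₁ w₂ : ℤ → ℕ} {s₁ s₂ : ℤ}
    (hw₁ : ∀ j, w₁ j < m 1) (hw₂ : ∀ j, w₂ j < m 1)
    (h₁ : IsShiftedImage (τ 0) w₁ s₁ X) (h₂ : IsShiftedImage (τ 0) w₂ s₂ Y)
    (hXY : ∀ i < 0, X i = Y i) (hX : ∀ c, ∃ p < c, IsClassChange m τ X p) :
    CommonCutsUnbounded (τ 0) w₁ s₁ w₂ s₂ := by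
  intro c
  obtain ⟨p, hpc, hp⟩ := hX (min c 0)
  have hpY : IsClassChange m τ Y p := by
    rwa [IsClassChange, ← hXY p (by omega), ← hXY (p - 1) (by omega)]
  obtain ⟨a, ha⟩ := h₁.exists_blockStart_of_isClassChange hw₁ (fun j => hP.ne_nil (hw₁ j)) hp
  obtain ⟨b, hb⟩ := h₂.exists_blockStart_of_isClassChange hw₂ (fun j => hP.ne_nil (hw₂ j)) hpY
  exact ⟨a, b, ha.trans hb.symm, by omega⟩

theorem PropertyPinf.commonCutsUnbounded {n : ℕ} (hn : 1 ≤ n) {X Y w₁ w₂ : ℤ → ℕ}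
    {s₁ s₂ : ℤ} (hw₁ : ∀ j, w₁ j < m (n + 1)) (hw₂ : ∀ j, w₂ j < m (n + 1))
    (h₁ : IsShiftedImage (τ n) w₁ s₁ X) (h₂ : IsShiftedImage (τ n) w₂ s₂ Y)
    (hXY : ∀ i < 0, X i = Y i) : CommonCutsUnbounded (τ n) w₁ s₁ w₂ s₂ := by
  intro c
  obtain ⟨a, ha⟩ := exists_blockStart_lt (r := s₁) (fun j => hP.ne_nil (hw₁ j)) (min c 0)
  obtain ⟨hlast, hfirst⟩ := (hP.exists_blockStart_iff hn hw₁ h₁ _).1 ⟨a, rfl⟩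
  rw [hXY _ (by omega)] at hlast hfirst
  obtain ⟨b, hb⟩ := (hP.exists_blockStart_iff hn hw₂ h₂ _).2 ⟨hlast, hfirst⟩
  exact ⟨a, b, hb.symm, by omega⟩

theorem PropertyPinf.exists_isCenteredFactorization_of_succ {n : ℕ} {w x : ℤ → ℕ} {r : ℤ}
    (h : IsCenteredFactorization m τ (n + 1) w r x) :
    ∃ z r' s, IsCenteredFactorization m τ n z r' x ∧ IsCenteredImage (τ n) w s z := by
  obtain ⟨hw, hT, hr₀, hr₁⟩ := h
  have hne j : τ n (w j) ≠ [] := hP.ne_nil (hw j)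
  rw [tauIter_zero_succ] at hT hr₁
  set z := concatSeq (τ n) w with hz_def
  have hz i : z i < m n :=
    let ⟨j, hj⟩ := exists_concatSeq_mem hne i
    hP.lt_of_mem (hw j) hj
  have hne' i : tauIter τ 0 n (z i) ≠ [] := hP.tauIter_ne_nil (hz i)
  obtain ⟨k, hk⟩ := exists_mem_block (r := r) hne' 0
  refine ⟨SShift k z, r - cumLen (tauIter τ 0 n) z k, k,
    ⟨fun i => hz _, (hT.of_flatMap hne).isCenteredImage_sshift hk⟩,
    by simpa using (isShiftedImage_concatSeq hne).sshift k, ?_⟩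
  have mono := cumLen_strictMono (σ := tauIter τ 0 n) hne'
  have hlen := cumLen_flatMap (σ := tauIter τ 0 n) hne 1
  rw [cumLen_one, cumLen_one, ← hz_def] at hlen
  beta_reduce at hr₁ hlen
  simp only [blockStart] at hk
  constructor
  · by_contra! hk₀
    have := mono.monotone (show k + 1 ≤ 0 by omega)
    rw [cumLen_zero] at this
    omega
  · by_contra! hkL
    have := mono.monotone hkL
    omega

theorem PropertyPinf.eq_of_isCenteredFactorization {x : ℤ → ℕ}
    (hx : ∀ c, ∃ p < c, IsClassChange m τ x p) {n : ℕ} (hn : 1 ≤ n) :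
    ∀ {w₁ w₂ : ℤ → ℕ} {r₁ r₂ : ℤ}, IsCenteredFactorization m τ n w₁ r₁ x →
      IsCenteredFactorization m τ n w₂ r₂ x → w₁ = w₂ := by
  induction n, hn using Nat.le_induction with
  | base =>
    rintro w₁ w₂ r₁ r₂ ⟨hw₁, h₁⟩ ⟨hw₂, h₂⟩
    rw [tauIter_one] at h₁ h₂
    exact h₁.eq_of_cuts hP.isPrefixCodeOn_zero hw₁ hw₂ (fun a ha => hP.ne_nil ha) h₂
      (hP.commonCutsUnbounded_zero hw₁ hw₂ h₁.1 h₂.1 (fun _ _ => rfl) hx)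
  | succ n hn ih =>
    intro w₁ w₂ r₁ r₂ h₁ h₂
    obtain ⟨z₁, _, _, hz₁, hO₁⟩ := hP.exists_isCenteredFactorization_of_succ h₁
    obtain ⟨z₂, _, _, hz₂, hO₂⟩ := hP.exists_isCenteredFactorization_of_succ h₂
    obtain rfl := ih hz₁ hz₂
    exact hO₁.eq_of_cuts (hP.isPrefixCodeOn_succ hn) h₁.1 h₂.1 (fun a ha => hP.ne_nil ha) hO₂
      (hP.commonCutsUnbounded hn h₁.1 h₂.1 hO₁.1 hO₂.1 fun _ _ => rfl)

theorem PropertyPinf.exists_isCenteredImage_tau {x : ℤ → ℕ}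
    (hx : ∀ c, ∃ p < c, IsClassChange m τ x p) {n : ℕ} (hn : 1 ≤ n) {w w' : ℤ → ℕ}
    {r r' : ℤ} (h : IsCenteredFactorization m τ n w r x)
    (h' : IsCenteredFactorization m τ (n + 1) w' r' x) : ∃ s, IsCenteredImage (τ n) w' s w := by
  obtain ⟨z, _, s, hz, hs⟩ := hP.exists_isCenteredFactorization_of_succ h'
  obtain rfl := hP.eq_of_isCenteredFactorization hx hn hz h
  exact ⟨s, hs⟩

end Factorizations

/-- `J(x, y) = (x_{-1}, 0)`. -/
def DivergeAtZero (x y : ℤ → ℕ) : Prop := (∀ j < 0, x j = y j) ∧ x 0 ≠ y 0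

section Signal

variable {m : ℕ → ℕ} {τ : ℕ → ℕ → List ℕ} (hP : PropertyPinf m τ)
include hP

theorem PropertyPinf.divergeAtZero_one {x y w₁ w₂ : ℤ → ℕ} {r₁ r₂ : ℤ}
    (hx : ∀ c, ∃ p < c, IsClassChange m τ x p) (hxy : DivergeAtZero x y)
    (h₁ : IsCenteredFactorization m τ 1 w₁ r₁ x) (h₂ : IsCenteredFactorization m τ 1 w₂ r₂ y) :
    DivergeAtZero w₁ w₂ := by
  obtain ⟨hw₁, h₁⟩ := h₁
  obtain ⟨hw₂, h₂⟩ := h₂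
  rw [tauIter_one] at h₁ h₂
  obtain ⟨rfl, hpast⟩ := h₁.sync_past hP.isPrefixCodeOn_zero hw₁ hw₂ (fun a ha => hP.ne_nil ha)
    h₂ hxy.1 (hP.commonCutsUnbounded_zero hw₁ hw₂ h₁.1 h₂.1 hxy.1 hx)
  refine ⟨hpast, fun h0 => hxy.2 ?_⟩
  rw [h₁.apply_zero, h₂.apply_zero, h0]

/- After synchronization, `x` and `y` read `τ_n(w₁ 0)` and `τ_n(w₂ 0)` from the same position
`-r`; as they first differ at `0`, the offset `r` is the position where these images fork. -/
theorem PropertyPinf.signal_step {n : ℕ} (hn : 1 ≤ n) {x y w₁ w₂ : ℤ → ℕ} {r₁ r₂ : ℤ}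
    (hw₁ : ∀ j, w₁ j < m (n + 1)) (hw₂ : ∀ j, w₂ j < m (n + 1))
    (h₁ : IsCenteredImage (τ n) w₁ r₁ x) (h₂ : IsCenteredImage (τ n) w₂ r₂ y)
    (hxy : DivergeAtZero x y) :
    DivergeAtZero w₁ w₂ ∧ x (-1) = signalLetter n (w₁ 0) (w₂ 0) ∧
      y (-1) = signalLetter n (w₁ 0) (w₂ 0) ∧
      min (x 0) (y 0) = signalLetter n (w₁ 0) (w₂ 0) := by
  obtain ⟨rfl, hpast⟩ := h₁.sync_past (hP.isPrefixCodeOn_succ hn) hw₁ hw₂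
    (fun a ha => hP.ne_nil ha) h₂ hxy.1 (hP.commonCutsUnbounded hn hw₁ hw₂ h₁.1 h₂.1 hxy.1)
  have hdiff : w₁ 0 ≠ w₂ 0 := fun h0 => hxy.2 (by rw [h₁.apply_zero, h₂.apply_zero, h0])
  obtain ⟨u, p, q, hp, hq, hpq, hmin⟩ := hP.forksAfter_signalLetter hn (hw₁ 0) (hw₂ 0) hdiff
  obtain ⟨hup, hep, hpp⟩ := prefix_of_append_pair_prefix hp
  obtain ⟨huq, heq, hqq⟩ := prefix_of_append_pair_prefix hq
  have read₁ (i : ℕ) (hi : i < (τ n (w₁ 0)).length) :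
      x (-r₁ + i) = (τ n (w₁ 0)).getD i 0 := by
    simpa using h₁.1.apply_blockStart_add 0 hi
  have read₂ (i : ℕ) (hi : i < (τ n (w₂ 0)).length) :
      y (-r₁ + i) = (τ n (w₂ 0)).getD i 0 := by
    simpa using h₂.1.apply_blockStart_add 0 hi
  have hlen₁ := hp.length_le
  have hlen₂ := hq.length_le
  simp only [List.length_append, List.length_cons, List.length_nil] at hlen₁ hlen₂
  obtain rfl : r₁ = u.length + 1 := by
    rcases lt_trichotomy r₁ (u.length + 1) with hlt | hr | hgt
    · refine absurd ?_ hxy.2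
      have hi : r₁.toNat < (u ++ [signalLetter n (w₁ 0) (w₂ 0)]).length := by
        rw [List.length_append, List.length_singleton]; omega
      rw [h₁.apply_zero, h₂.apply_zero, getD_eq_of_prefix hup hi, getD_eq_of_prefix huq hi]
    · exact hr
    · refine absurd ?_ hpq
      have := hxy.1 (-r₁ + (u.length + 1 : ℕ)) (by omega)
      rwa [read₁ _ (by omega), read₂ _ (by omega), hpp, hqq] at this
  have hx₁ := read₁ u.length (by omega)
  have hy₁ := read₂ u.length (by omega)
  have hx₀ := read₁ (u.length + 1) (by omega)
  have hy₀ := read₂ (u.length + 1) (by omega)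
  rw [show -(u.length + 1 : ℤ) + u.length = -1 by ring] at hx₁ hy₁
  rw [show -(u.length + 1 : ℤ) + (u.length + 1 : ℕ) = 0 by push_cast; ring] at hx₀ hy₀
  rw [hx₁, hy₁, hx₀, hy₀, hep, heq, hpp, hqq]
  exact ⟨⟨hpast, hdiff⟩, rfl, rfl, hmin⟩

theorem PropertyPinf.signal_step_of_isCenteredFactorization {x y : ℤ → ℕ}
    (hx : ∀ c, ∃ p < c, IsClassChange m τ x p) (hy : ∀ c, ∃ p < c, IsClassChange m τ y p)
    {n : ℕ} (hn : 1 ≤ n) {w₁ w₂ w₁' w₂' : ℤ → ℕ} {r₁ r₂ r₁' r₂' : ℤ}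
    (h₁ : IsCenteredFactorization m τ n w₁ r₁ x) (h₂ : IsCenteredFactorization m τ n w₂ r₂ y)
    (h₁' : IsCenteredFactorization m τ (n + 1) w₁' r₁' x)
    (h₂' : IsCenteredFactorization m τ (n + 1) w₂' r₂' y) (hw : DivergeAtZero w₁ w₂) :
    DivergeAtZero w₁' w₂' ∧ w₁ (-1) = signalLetter n (w₁' 0) (w₂' 0) ∧
      w₂ (-1) = signalLetter n (w₁' 0) (w₂' 0) ∧
      min (w₁ 0) (w₂ 0) = signalLetter n (w₁' 0) (w₂' 0) := by
  obtain ⟨s₁, hs₁⟩ := hP.exists_isCenteredImage_tau hx hn h₁ h₁'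
  obtain ⟨s₂, hs₂⟩ := hP.exists_isCenteredImage_tau hy hn h₂ h₂'
  exact hP.signal_step hn h₁'.1 h₂'.1 hs₁ hs₂ hw

end Signal

theorem exists_forall_ge_eq_of_pos_imp_succ_eq {d : ℕ → ℕ}
    (h : ∀ n ≥ 1, 0 < d n → d (n + 1) = d n) : ∃ N ≥ 1, ∀ n ≥ N, d n = d N := by
  by_cases hzero : ∀ n ≥ 1, d n = 0
  · exact ⟨1, le_rfl, fun n hn => by rw [hzero n hn, hzero 1 le_rfl]⟩
  simp only [not_forall] at hzero
  obtain ⟨N, hN, hdN⟩ := hzero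
  refine ⟨N, hN, fun n hn => ?_⟩
  induction n, hn using Nat.le_induction with
  | base => rfl
  | succ n hn ih => rw [h n (by omega) (by omega), ih]

theorem eventual_signal_of_propertyPinf_general
    (m : ℕ → ℕ) (τ : ℕ → ℕ → List ℕ) (hP : PropertyPinf m τ)
    (x y : ℤ → ℕ)
    (heq : ∀ i < (0 : ℤ), x i = y i) (hne : x 0 ≠ y 0)
    (xs ys : ℕ → ℤ → ℕ) (r t : ℕ → ℕ)
    (hxs : ∀ n, 1 ≤ n → xs n ∈ SAdicLevel m τ n ∧
      r n < (tauIter τ 0 n (xs n 0)).length ∧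
      IsShiftedImage (tauIter τ 0 n) (xs n) ((r n : ℤ)) x)
    (hys : ∀ n, 1 ≤ n → ys n ∈ SAdicLevel m τ n ∧
      t n < (tauIter τ 0 n (ys n 0)).length ∧
      IsShiftedImage (tauIter τ 0 n) (ys n) ((t n : ℤ)) y) :
    ∃ N i, 1 ≤ N ∧ 1 ≤ i ∧ i ≤ N ∧ ∀ n, N ≤ n →
      (∀ j < (0 : ℤ), xs n j = ys n j) ∧ xs n 0 ≠ ys n 0 ∧
      xs n (-1) = i - 1 ∧ ys n (-1) = i - 1 := by
  have hX n (hn : 1 ≤ n) : IsCenteredFactorization m τ n (xs n) (r n) x :=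
    ⟨(hxs n hn).1.1, (hxs n hn).2.2, by omega, by exact_mod_cast (hxs n hn).2.1⟩
  have hY n (hn : 1 ≤ n) : IsCenteredFactorization m τ n (ys n) (t n) y :=
    ⟨(hys n hn).1.1, (hys n hn).2.2, by omega, by exact_mod_cast (hys n hn).2.1⟩
  have hcx := hP.exists_isClassChange_lt (hX 2 (by norm_num)).1 (hX 2 (by norm_num)).2.1
  have hcy := hP.exists_isClassChange_lt (hY 2 (by norm_num)).1 (hY 2 (by norm_num)).2.1
  have hstep n (hn : 1 ≤ n) := hP.signal_step_of_isCenteredFactorization hcx hcy hn (hX n hn)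
    (hY n hn) (hX (n + 1) (by omega)) (hY (n + 1) (by omega))
  have hdiv n (hn : 1 ≤ n) : DivergeAtZero (xs n) (ys n) := by
    induction n, hn using Nat.le_induction with
    | base => exact hP.divergeAtZero_one hcx ⟨heq, hne⟩ (hX 1 le_rfl) (hY 1 le_rfl)
    | succ n hn ih => exact (hstep n hn ih).1
  obtain ⟨N, hN, hconst⟩ := exists_forall_ge_eq_of_pos_imp_succ_eq
    (d := fun n => min (xs n 0) (ys n 0)) fun n hn hpos => by
      obtain ⟨-, -, -, hmin⟩ := hstep n hn (hdiv n hn)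
      exact (hmin.trans (signalLetter_eq_min_of_pos (hmin ▸ hpos))).symm
  refine ⟨N + min (xs N 0) (ys N 0) + 1, min (xs N 0) (ys N 0) + 1, by omega, by omega, by omega,
    fun n hn => ?_⟩
  obtain ⟨-, hx₁, hy₁, hmin⟩ := hstep n (by omega) (hdiv n (by omega))
  have := hconst n (by omega)
  exact ⟨(hdiv n (by omega)).1, (hdiv n (by omega)).2, by omega, by omega⟩

/-- Under Property `(P_∞)`: if `x, y ∈ X_τ` agree on negative
coordinates and differ at `0`, and for every `n ≥ 1` the pair `x⁽ⁿ⁾, y⁽ⁿ⁾` gives the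
centered `τ_{[0,n)}`-factorizations of `x` and `y`, then there are `N ≥ 1` and
`1 ≤ i ≤ N` with `J(x⁽ⁿ⁾, y⁽ⁿ⁾) = (v_{i,n}, 0)` for all `n ≥ N`.
(Letters are `0`-based: `v_{i,n}` is `i - 1`.) -/
theorem eventual_signal_of_propertyPinf
    (m : ℕ → ℕ) (τ : ℕ → ℕ → List ℕ) (hP : PropertyPinf m τ)
    (x y : ℤ → ℕ) (hx : x ∈ SAdicLevel m τ 0) (hy : y ∈ SAdicLevel m τ 0)
    (heq : ∀ i < (0 : ℤ), x i = y i) (hne : x 0 ≠ y 0)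
    (xs ys : ℕ → ℤ → ℕ) (r t : ℕ → ℕ)
    (hxs : ∀ n, 1 ≤ n → xs n ∈ SAdicLevel m τ n ∧
      r n < (tauIter τ 0 n (xs n 0)).length ∧
      IsShiftedImage (tauIter τ 0 n) (xs n) ((r n : ℤ)) x)
    (hys : ∀ n, 1 ≤ n → ys n ∈ SAdicLevel m τ n ∧
      t n < (tauIter τ 0 n (ys n 0)).length ∧
      IsShiftedImage (tauIter τ 0 n) (ys n) ((t n : ℤ)) y) :
    ∃ N i, 1 ≤ N ∧ 1 ≤ i ∧ i ≤ N ∧ ∀ n, N ≤ n →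
      (∀ j < (0 : ℤ), xs n j = ys n j) ∧ xs n 0 ≠ ys n 0 ∧
      xs n (-1) = i - 1 ∧ ys n (-1) = i - 1 :=
  eventual_signal_of_propertyPinf_general m τ hP x y heq hne xs ys r t hxs hys

end AsympSOE
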